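/- The function ρ(t₁,t₂) = ((1-12t₁t₂)^{3/2} + 18t₁t₂ - 1)/(108 t₂²), defined for t₂ ≠ 0 and 12t₁t₂ < 1, satisfies the homogeneous Monge–Ampère equation ρ₁₁ρ₂₂ - ρ₁₂² = 0, and its second derivative in t₁ is ρ₁₁ = (1-12t₁t₂)^{-1/2} > 0. -/

import Mathlib

/-!
Write `u = 1 - 12 t₁ t₂` and `φ = (1 - √u) / (6 t₂)`. Then `ρ₁ = φ` and `ρ₂ = φ³`. Since
`6 t₂ φ = 1 - √u`, squaring gives the implicit equation `φ - 3 t₂ φ² = t₁`, whose derivatives are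
`φ₁ = 1 / √u` and `φ₂ = 3 φ² φ₁`. Hence `ρ₁₁ = φ₁`, `ρ₁₂ = φ₂ = 3 φ² φ₁` and `ρ₂₂ = 3 φ² φ₂`,
so that `ρ₁₁ ρ₂₂ - ρ₁₂² = 3 φ² φ₁ φ₂ - φ₂² = 0`.
-/

noncomputable section

/-- Partial derivative in the first variable. -/
def pd1 (f : ℝ → ℝ → ℝ) : ℝ → ℝ → ℝ := fun t1 t2 => deriv (fun s => f s t2) t1

/-- Partial derivative in the second variable. -/
def pd2 (f : ℝ → ℝ → ℝ) : ℝ → ℝ → ℝ := fun t1 t2 => deriv (fun s => f t1 s) t2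

/-- The explicit solution `ρ` of the homogeneous Monge–Ampère equation. -/
def rho : ℝ → ℝ → ℝ := fun t1 t2 =>
  ((1 - 12 * t1 * t2) ^ ((3 : ℝ) / 2) + 18 * t1 * t2 - 1) / (108 * t2 ^ 2)

open Topology

def phi (t1 t2 : ℝ) : ℝ := (1 - √(1 - 12 * t1 * t2)) / (6 * t2)

lemma rpow_three_div_two_eq_mul_sqrt {x : ℝ} (hx : 0 ≤ x) : x ^ ((3 : ℝ) / 2) = x * √x := by
  rw [Real.sqrt_eq_rpow, ← Real.rpow_one_add' hx (by norm_num)]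
  norm_num

lemma hasDerivAt_one_sub_mul_fst (t1 t2 : ℝ) :
    HasDerivAt (fun s => 1 - 12 * s * t2) (-(12 * t2)) t1 := by
  simpa using (((hasDerivAt_id t1).const_mul 12).mul_const t2).const_sub 1

lemma hasDerivAt_one_sub_mul_snd (t1 t2 : ℝ) :
    HasDerivAt (fun s => 1 - 12 * t1 * s) (-(12 * t1)) t2 := by
  simpa using ((hasDerivAt_id t2).const_mul (12 * t1)).const_sub 1

section

variable {t1 t2 : ℝ}

lemma hasDerivAt_rho_fst (ht2 : t2 ≠ 0) : HasDerivAt (fun s => rho s t2) (phi t1 t2) t1 := by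
  have h : HasDerivAt (fun s => rho s t2) _ t1 :=
    ((((hasDerivAt_one_sub_mul_fst t1 t2).rpow_const (p := 3 / 2) (Or.inr (by norm_num))).add
      (((hasDerivAt_id t1).const_mul 18).mul_const t2)).sub_const 1).div_const (108 * t2 ^ 2)
  refine h.congr_deriv ?_
  rw [show (3 : ℝ) / 2 - 1 = 1 / 2 by norm_num, ← Real.sqrt_eq_rpow, phi]
  field_simp
  ring

lemma hasDerivAt_rho_snd (ht2 : t2 ≠ 0) (hu : 0 < 1 - 12 * t1 * t2) :
    HasDerivAt (fun s => rho t1 s) (phi t1 t2 ^ 3) t2 := by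
  have h : HasDerivAt (fun s => rho t1 s) _ t2 :=
    ((((hasDerivAt_one_sub_mul_snd t1 t2).rpow_const (p := 3 / 2) (Or.inr (by norm_num))).add
      ((hasDerivAt_id t2).const_mul (18 * t1))).sub_const 1).div
      ((hasDerivAt_pow 2 t2).const_mul 108) (by positivity)
  refine h.congr_deriv ?_
  have hv := Real.sq_sqrt hu.le
  simp only [Pi.add_apply, id, rpow_three_div_two_eq_mul_sqrt hu.le]
  rw [show (3 : ℝ) / 2 - 1 = 1 / 2 by norm_num, ← Real.sqrt_eq_rpow, phi]
  generalize √(1 - 12 * t1 * t2) = v at hv ⊢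
  obtain rfl : t1 = (1 - v ^ 2) / (12 * t2) := by field_simp; linarith
  field_simp
  ring

lemma hasDerivAt_phi_fst (ht2 : t2 ≠ 0) (hu : 0 < 1 - 12 * t1 * t2) :
    HasDerivAt (fun s => phi s t2) (√(1 - 12 * t1 * t2))⁻¹ t1 := by
  have h : HasDerivAt (fun s => phi s t2) _ t1 :=
    (((hasDerivAt_one_sub_mul_fst t1 t2).sqrt hu.ne').const_sub 1).div_const (6 * t2)
  refine h.congr_deriv ?_
  field_simp
  ring

lemma hasDerivAt_phi_snd (ht2 : t2 ≠ 0) (hu : 0 < 1 - 12 * t1 * t2) :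
    HasDerivAt (fun s => phi t1 s) (3 * phi t1 t2 ^ 2 / √(1 - 12 * t1 * t2)) t2 := by
  have h : HasDerivAt (fun s => phi t1 s) _ t2 :=
    (((hasDerivAt_one_sub_mul_snd t1 t2).sqrt hu.ne').const_sub 1).div
      ((hasDerivAt_id t2).const_mul 6) (by simpa using ht2)
  refine h.congr_deriv ?_
  have hv := Real.sq_sqrt hu.le
  unfold phi
  field_simp
  linear_combination 6 * hv

lemma pd1_rho (ht2 : t2 ≠ 0) : pd1 rho t1 t2 = phi t1 t2 :=
  (hasDerivAt_rho_fst ht2).deriv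

lemma pd1_pd1_rho (ht2 : t2 ≠ 0) (hu : 0 < 1 - 12 * t1 * t2) :
    pd1 (pd1 rho) t1 t2 = (√(1 - 12 * t1 * t2))⁻¹ := by
  have h : (fun s => pd1 rho s t2) = fun s => phi s t2 := funext fun _ => pd1_rho ht2
  change deriv (fun s => pd1 rho s t2) t1 = _
  rw [h, (hasDerivAt_phi_fst ht2 hu).deriv]

lemma pd2_pd1_rho (ht2 : t2 ≠ 0) (hu : 0 < 1 - 12 * t1 * t2) :
    pd2 (pd1 rho) t1 t2 = 3 * phi t1 t2 ^ 2 / √(1 - 12 * t1 * t2) := by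
  have h : (fun s => pd1 rho t1 s) =ᶠ[𝓝 t2] fun s => phi t1 s := by
    filter_upwards [eventually_ne_nhds ht2] with s hs using pd1_rho hs
  exact h.deriv_eq.trans (hasDerivAt_phi_snd ht2 hu).deriv

lemma pd2_pd2_rho (ht2 : t2 ≠ 0) (hu : 0 < 1 - 12 * t1 * t2) :
    pd2 (pd2 rho) t1 t2 = 3 * phi t1 t2 ^ 2 * (3 * phi t1 t2 ^ 2 / √(1 - 12 * t1 * t2)) := by
  have hu_nhds : ∀ᶠ s in 𝓝 t2, 0 < 1 - 12 * t1 * s :=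
    continuousAt_const.eventually_lt (by fun_prop) hu
  have h : (fun s => pd2 rho t1 s) =ᶠ[𝓝 t2] fun s => phi t1 s ^ 3 := by
    filter_upwards [eventually_ne_nhds ht2, hu_nhds] with s hs hus using
      (hasDerivAt_rho_snd hs hus).deriv
  rw [pd2, h.deriv_eq, ((hasDerivAt_phi_snd ht2 hu).fun_pow 3).deriv]
  norm_num

end

theorem stmt13 :
    ∀ t1 t2 : ℝ, t2 ≠ 0 → 12 * t1 * t2 < 1 →
      pd1 (pd1 rho) t1 t2 = (1 - 12 * t1 * t2) ^ (-(1 : ℝ) / 2) ∧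
      0 < pd1 (pd1 rho) t1 t2 ∧
      pd1 (pd1 rho) t1 t2 * pd2 (pd2 rho) t1 t2 - (pd2 (pd1 rho) t1 t2) ^ 2 = 0 := by
  intro t1 t2 ht2 h
  have hu : 0 < 1 - 12 * t1 * t2 := by linarith
  have hrpow : (1 - 12 * t1 * t2) ^ (-(1 : ℝ) / 2) = (√(1 - 12 * t1 * t2))⁻¹ := by
    rw [neg_div, Real.rpow_neg hu.le, Real.sqrt_eq_rpow]
  rw [pd1_pd1_rho ht2 hu, pd2_pd1_rho ht2 hu, pd2_pd2_rho ht2 hu, hrpow]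
  exact ⟨rfl, inv_pos.2 (Real.sqrt_pos.2 hu), by ring⟩
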